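/- For an odd prime N and u coprime to N, the discrete Fourier transform of the Zadoff–Chu sequence x_u[n] = exp(-iπ u n(n+1)/N) satisfies X_u[k] = X_u[0] · conj(x_u[u⁻¹ k]) for every k, where u⁻¹ is the multiplicative inverse of u modulo N and X_u[k] = Σ_{n=0}^{N-1} x_u[n]·exp(-2πi kn/N). -/

import Mathlib

open Complex

/-! Since `N` is odd, `n (n + 1) / 2` changes by a multiple of `N` when `n` changes by `N`, so `x_u` is
`N`-periodic. With `m = u⁻¹ k` we have `k ≡ u m`, and completing the square gives
`x_u[n] e^{-2πikn/N} = x_u[n + m] · conj (x_u[m])`. Hence `X_u[k] = conj (x_u[m]) · Σ x_u[n + m]`,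
and the sum runs over a full period of `x_u`, so it equals `X_u[0]`. -/

open ComplexConjugate Finset

theorem Function.Periodic.sum_range_comp_add_one {M : Type*} [AddCommMonoid M] {f : ℤ → M}
    {N : ℕ} (hf : Function.Periodic f N) :
    ∑ n ∈ range N, f (n + 1) = ∑ n ∈ range N, f n := by
  cases N with
  | zero => rfl
  | succ N =>
    rw [sum_range_succ, sum_range_succ' (fun n : ℕ => f n), Nat.cast_zero]
    push_cast
    congr 1
    simpa using hf 0

theorem Function.Periodic.sum_range_comp_add {M : Type*} [AddCommMonoid M] {f : ℤ → M}
    {N : ℕ} (hf : Function.Periodic f N) (m : ℤ) :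
    ∑ n ∈ range N, f (n + m) = ∑ n ∈ range N, f n := by
  induction m using Int.induction_on with
  | zero => simp
  | succ m ih =>
    rw [← ih, ← (hf.add_const m).sum_range_comp_add_one]
    simp only [add_assoc, add_comm (1 : ℤ)]
  | pred m ih =>
    rw [← ih, ← (hf.add_const (-(m : ℤ) - 1)).sum_range_comp_add_one]
    simp only [add_assoc]
    norm_num

noncomputable def zadoffChu (N : ℕ) (u n : ℤ) : ℂ :=
  exp (-((Real.pi : ℂ) * u * n * (n + 1) / N) * I)

theorem zadoffChu_periodic {N : ℕ} (hN : Odd N) (u : ℤ) :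
    Function.Periodic (zadoffChu N u) N := by
  intro n
  have hN0 : (N : ℂ) ≠ 0 := by exact_mod_cast hN.pos.ne'
  obtain ⟨c, hc⟩ := hN
  refine exp_eq_exp_iff_exists_int.mpr ⟨-(u * (n + c + 1)), ?_⟩
  have hc' : (N : ℂ) = 2 * c + 1 := by exact_mod_cast hc
  push_cast
  field_simp
  rw [hc']
  ring

theorem conj_zadoffChu (N : ℕ) (u n : ℤ) :
    conj (zadoffChu N u n) = exp (((Real.pi : ℂ) * u * n * (n + 1) / N) * I) := by
  rw [zadoffChu, ← exp_conj]
  simp [map_div₀, conj_I]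

theorem zadoffChu_mul_exp {N : ℕ} (hN : N ≠ 0) {u k m t : ℤ} (hk : k = u * m + N * t) (n : ℤ) :
    zadoffChu N u n * exp (-(2 * (Real.pi : ℂ) * I * k * n / N))
      = zadoffChu N u (n + m) * conj (zadoffChu N u m) := by
  rw [conj_zadoffChu, zadoffChu, zadoffChu, ← exp_add, ← exp_add]
  refine exp_eq_exp_iff_exists_int.mpr ⟨-(n * t), ?_⟩
  have hN0 : (N : ℂ) ≠ 0 := by exact_mod_cast hN
  subst hk
  push_cast
  field_simp
  ring

theorem zc_dft_general (N : ℕ) (hodd : Odd N) (u uinv : ℤ)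
    (hinv : u * uinv ≡ 1 [ZMOD (N : ℤ)])
    (x : ℤ → ℂ)
    (hx : ∀ n : ℤ, x n =
      Complex.exp (-((Real.pi : ℂ) * u * (n : ℂ) * ((n : ℂ) + 1) / N) * Complex.I))
    (X : ℤ → ℂ)
    (hX : ∀ k : ℤ, X k = ∑ n ∈ Finset.range N,
      x n * Complex.exp (-(2 * (Real.pi : ℂ) * Complex.I * k * n / N)))
    (k : ℤ) :
    X k = X 0 * (starRingEnd ℂ) (x (uinv * k)) := by
  obtain rfl : x = zadoffChu N u := funext hx
  obtain ⟨d, hd⟩ := hinv.dvd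
  have hk : k = u * (uinv * k) + N * (k * d) := by linear_combination k * hd
  have hterm (n : ℕ) : zadoffChu N u n * exp (-(2 * (Real.pi : ℂ) * I * k * n / N))
      = zadoffChu N u (n + uinv * k) * conj (zadoffChu N u (uinv * k)) := by
    exact_mod_cast zadoffChu_mul_exp hodd.pos.ne' hk n
  simp_rw [hX, hterm, ← sum_mul, (zadoffChu_periodic hodd u).sum_range_comp_add]
  simp

/-- The DFT of a Zadoff–Chu sequence of odd prime length is a scaled, time-scaled
Zadoff–Chu sequence: `X_u[k] = X_u[0] * conj (x_u[u⁻¹ k])`. -/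
theorem zc_dft (N : ℕ) (hN : N.Prime) (hodd : Odd N) (u uinv : ℤ)
    (hu1 : 1 ≤ u) (hu2 : u ≤ (N : ℤ) - 1) (hinv : u * uinv ≡ 1 [ZMOD (N : ℤ)])
    (x : ℤ → ℂ)
    (hx : ∀ n : ℤ, x n =
      Complex.exp (-((Real.pi : ℂ) * u * (n : ℂ) * ((n : ℂ) + 1) / N) * Complex.I))
    (X : ℤ → ℂ)
    (hX : ∀ k : ℤ, X k = ∑ n ∈ Finset.range N,
      x n * Complex.exp (-(2 * (Real.pi : ℂ) * Complex.I * k * n / N)))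
    (k : ℤ) :
    X k = X 0 * (starRingEnd ℂ) (x (uinv * k)) :=
  zc_dft_general N hodd u uinv hinv x hx X hX k
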